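/- arXiv:1511.08401 — 3 statements merged into one kernel-verified Lean document; each statement's English description precedes it below -/
import Mathlib

section
/- Let 0 ≤ α ≤ 1 and 0 < θ ≤ π/4, write c = cos θ, s = sin θ, A = (1+α)/2, B = (1−α)/2, and let ρ_{α,θ} be the 4×4 complex matrix with diagonal entries Ac², Bc², Bs², As² (in the basis |00⟩, |01⟩, |10⟩, |11⟩) and off-diagonal entries αcs at positions (|00⟩,|11⟩) and (|11⟩,|00⟩), all other entries zero. Let ρ^{T_B} denote its partial transpose on the second qubit, defined entrywise by ρ^{T_B}[(a,b),(a',b')] = ρ[(a,b'),(a',b)]. Then ρ^{T_B} is positive semidefinite if and only if α ≤ 1/3. -/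
/-!
Group the basis into the even-parity states `|00⟩, |11⟩` and the odd-parity states
`|01⟩, |10⟩`. In this splitting `ρ^{T_B}` is block diagonal, `diag(Ac², As²) ⊕ [[Bc², αcs],
[αcs, Bs²]]`. The first block is always positive semidefinite, and the second one is iff its
determinant `c²s²(B² - α²)` is nonnegative, i.e. iff `α ≤ B = (1 - α)/2`.
-/

open Matrix
open scoped ComplexOrder

theorem quadratic_form_nonneg_of_sq_le_mul {a b d : ℝ} (ha : 0 ≤ a) (hd : 0 ≤ d)
    (hb : b ^ 2 ≤ a * d) (u v : ℝ) : 0 ≤ a * u ^ 2 + 2 * b * u * v + d * v ^ 2 := by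
  rcases (add_nonneg ha hd).eq_or_lt with had | had
  · obtain ⟨rfl, rfl⟩ : a = 0 ∧ d = 0 := ⟨by linarith, by linarith⟩
    obtain rfl : b = 0 := by nlinarith
    simp
  · -- `a * form = (a u + b v)² + (a d - b²) v²`, and symmetrically for `d * form`
    refine nonneg_of_mul_nonneg_right ?_ had
    nlinarith [sq_nonneg (a * u + b * v), sq_nonneg (b * u + d * v),
      mul_nonneg (sub_nonneg.2 hb) (sq_nonneg u), mul_nonneg (sub_nonneg.2 hb) (sq_nonneg v)]

namespace Matrix

theorem posSemidef_fromBlocks_zero_iff {m n R : Type*} [Fintype m] [Fintype n] [Ring R]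
    [PartialOrder R] [StarRing R] [AddLeftMono R] {A : Matrix m m R} {D : Matrix n n R} :
    (fromBlocks A 0 0 D).PosSemidef ↔ A.PosSemidef ∧ D.PosSemidef := by
  refine ⟨fun h => ⟨h.submatrix Sum.inl, h.submatrix Sum.inr⟩,
    fun ⟨hA, hD⟩ => .of_dotProduct_mulVec_nonneg ?_ fun x => ?_⟩
  · simpa [isHermitian_fromBlocks_iff] using ⟨hA.isHermitian, hD.isHermitian⟩
  · rw [← Sum.elim_comp_inl_inr x, fromBlocks_mulVec]
    simpa [dotProduct, Fintype.sum_sum_type] using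
      add_nonneg (hA.dotProduct_mulVec_nonneg (x ∘ Sum.inl))
        (hD.dotProduct_mulVec_nonneg (x ∘ Sum.inr))

theorem posSemidef_fin_two_ofReal_iff (a b d : ℝ) :
    (!![(a : ℂ), b; b, d]).PosSemidef ↔ 0 ≤ a ∧ 0 ≤ d ∧ b ^ 2 ≤ a * d := by
  constructor
  · intro h
    have ha : 0 ≤ a := by simpa using h.diag_nonneg (i := 0)
    have hd : 0 ≤ d := by simpa using h.diag_nonneg (i := 1)
    have hq : ∀ t : ℝ, 0 ≤ a * (t * t) + 2 * b * t + d := fun t => by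
      have := h.dotProduct_mulVec_nonneg ![(t : ℂ), 1]
      simp only [dotProduct, Pi.star_apply, RCLike.star_def, mulVec, of_apply, cons_val',
        cons_val_fin_one, Fin.sum_univ_two, Fin.isValue, cons_val_zero, cons_val_one, mul_one,
        Complex.conj_ofReal, map_one, one_mul] at this
      have hreal : 0 ≤ t * (a * t + b) + (b * t + d) := by exact_mod_cast this
      linear_combination hreal
    have hdiscr := discrim_le_zero hq
    unfold discrim at hdiscr
    exact ⟨ha, hd, by linarith⟩
  · rintro ⟨ha, hd, hb⟩
    refine .of_dotProduct_mulVec_nonneg ?_ fun x => ?_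
    · ext i j
      fin_cases i <;> fin_cases j <;> simp
    · simp only [dotProduct, Pi.star_apply, RCLike.star_def, mulVec, of_apply, cons_val',
        cons_val_fin_one, Fin.sum_univ_two, Fin.isValue, cons_val_zero, cons_val_one,
        Complex.le_def, Complex.zero_re, Complex.add_re, Complex.mul_re, Complex.conj_re,
        Complex.ofReal_re, Complex.ofReal_im, zero_mul, sub_zero, Complex.conj_im, Complex.add_im,
        Complex.mul_im, add_zero, neg_mul, sub_neg_eq_add, Complex.zero_im]
      constructor
      · linarith [quadratic_form_nonneg_of_sq_le_mul ha hd hb (x 0).re (x 1).re,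
          quadratic_form_nonneg_of_sq_le_mul ha hd hb (x 0).im (x 1).im]
      · ring

end Matrix

def parityEquiv : Fin 2 ⊕ Fin 2 ≃ Fin 2 × Fin 2 where
  toFun := Sum.elim (fun i => (i, i)) (fun i => (i, i + 1))
  invFun p := if p.1 = p.2 then .inl p.1 else .inr p.1
  left_inv := by decide
  right_inv := by decide

theorem stmt6_general (α θ : ℝ) (hα0 : 0 ≤ α)
    (hθ0 : 0 < θ) (hθ : θ ≤ Real.pi / 4) :
    let c : ℝ := Real.cos θ
    let s : ℝ := Real.sin θ
    let A : ℝ := (1 + α) / 2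
    let B : ℝ := (1 - α) / 2
    let ρ : Matrix (Fin 2 × Fin 2) (Fin 2 × Fin 2) ℂ :=
      Matrix.of (fun p q : Fin 2 × Fin 2 =>
        if p = (0, 0) ∧ q = (0, 0) then ((A * c ^ 2 : ℝ) : ℂ)
        else if p = (0, 1) ∧ q = (0, 1) then ((B * c ^ 2 : ℝ) : ℂ)
        else if p = (1, 0) ∧ q = (1, 0) then ((B * s ^ 2 : ℝ) : ℂ)
        else if p = (1, 1) ∧ q = (1, 1) then ((A * s ^ 2 : ℝ) : ℂ)
        else if (p = (0, 0) ∧ q = (1, 1)) ∨ (p = (1, 1) ∧ q = (0, 0)) then ((α * c * s : ℝ) : ℂ)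
        else 0)
    -- partial transpose on the second qubit: ρ^{T_B}[(a,b),(a',b')] = ρ[(a,b'),(a',b)]
    let ρTB : Matrix (Fin 2 × Fin 2) (Fin 2 × Fin 2) ℂ :=
      Matrix.of fun p q : Fin 2 × Fin 2 => ρ (p.1, q.2) (q.1, p.2)
    (ρTB.PosSemidef ↔ α ≤ 1 / 3) := by
  intro c s A B ρ ρTB
  have hc : 0 < c := Real.cos_pos_of_mem_Ioo ⟨by linarith [Real.pi_pos], by linarith⟩
  have hs : 0 < s := Real.sin_pos_of_pos_of_lt_pi hθ0 (by linarith [Real.pi_pos])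
  have hblocks : ρTB.submatrix parityEquiv parityEquiv =
      fromBlocks (diagonal ![((A * c ^ 2 : ℝ) : ℂ), ((A * s ^ 2 : ℝ) : ℂ)]) 0 0
        !![((B * c ^ 2 : ℝ) : ℂ), ((α * c * s : ℝ) : ℂ);
           ((α * c * s : ℝ) : ℂ), ((B * s ^ 2 : ℝ) : ℂ)] := by
    ext (i | i) (j | j) <;> fin_cases i <;> fin_cases j <;> simp [ρTB, ρ, parityEquiv]
  rw [← posSemidef_submatrix_equiv parityEquiv, hblocks, posSemidef_fromBlocks_zero_iff,
    posSemidef_diagonal_iff, posSemidef_fin_two_ofReal_iff]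
  have hcs : 0 < (c * s) ^ 2 := by positivity
  constructor
  · rintro ⟨-, hBc, -, hdet⟩
    have hB : 0 ≤ B := nonneg_of_mul_nonneg_left hBc (by positivity)
    have hαB : α ^ 2 ≤ B ^ 2 := le_of_mul_le_mul_right (by linarith) hcs
    have : α ≤ (1 - α) / 2 := (pow_le_pow_iff_left₀ hα0 hB two_ne_zero).1 hαB
    linarith
  · intro hα
    have hαB : α ≤ B := show α ≤ (1 - α) / 2 by linarith
    have hB : 0 ≤ B := hα0.trans hαB
    refine ⟨?_, by positivity, by positivity, ?_⟩
    · exact Fin.forall_fin_two.2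
        ⟨Complex.zero_le_real.2 (by positivity), Complex.zero_le_real.2 (by positivity)⟩
    · nlinarith [pow_le_pow_left₀ hα0 hαB 2]

/-- For `0 ≤ α ≤ 1` and `0 < θ ≤ π/4`, the partial transpose (on the second
qubit) of the state `ρ_{α,θ}` (given as the 4×4 matrix with diagonal `Ac², Bc², Bs², As²` and
corner entries `αcs`) is positive semidefinite if and only if `α ≤ 1/3`. -/
theorem stmt6 (α θ : ℝ) (hα0 : 0 ≤ α) (hα1 : α ≤ 1)
    (hθ0 : 0 < θ) (hθ : θ ≤ Real.pi / 4) :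
    let c : ℝ := Real.cos θ
    let s : ℝ := Real.sin θ
    let A : ℝ := (1 + α) / 2
    let B : ℝ := (1 - α) / 2
    let ρ : Matrix (Fin 2 × Fin 2) (Fin 2 × Fin 2) ℂ :=
      Matrix.of (fun p q : Fin 2 × Fin 2 =>
        if p = (0, 0) ∧ q = (0, 0) then ((A * c ^ 2 : ℝ) : ℂ)
        else if p = (0, 1) ∧ q = (0, 1) then ((B * c ^ 2 : ℝ) : ℂ)
        else if p = (1, 0) ∧ q = (1, 0) then ((B * s ^ 2 : ℝ) : ℂ)
        else if p = (1, 1) ∧ q = (1, 1) then ((A * s ^ 2 : ℝ) : ℂ)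
        else if (p = (0, 0) ∧ q = (1, 1)) ∨ (p = (1, 1) ∧ q = (0, 0)) then ((α * c * s : ℝ) : ℂ)
        else 0)
    -- partial transpose on the second qubit: ρ^{T_B}[(a,b),(a',b')] = ρ[(a,b'),(a',b)]
    let ρTB : Matrix (Fin 2 × Fin 2) (Fin 2 × Fin 2) ℂ :=
      Matrix.of fun p q : Fin 2 × Fin 2 => ρ (p.1, q.2) (q.1, p.2)
    (ρTB.PosSemidef ↔ α ≤ 1 / 3) :=
  stmt6_general α θ hα0 hθ0 hθ
end

section
/- Let N ≥ 1 be an integer, 0 ≤ α ≤ 1, 0 ≤ θ ≤ π/4, and write c = cos θ, s = sin θ, A = (1+α)/2, B = (1−α)/2. Let ρ be the 4×4 real matrix indexed by pairs (a,b) ∈ {0,1}² whose only nonzero entries are ρ[(0,0),(0,0)] = Ac², ρ[(0,1),(0,1)] = Bc², ρ[(1,0),(1,0)] = Bs², ρ[(1,1),(1,1)] = As², and ρ[(0,0),(1,1)] = ρ[(1,1),(0,0)] = αcs. Define the 2^N × 2^N matrix M indexed by functions f, g : {1,…,N} → {0,1} by M(f,g) = ∑_{u ∈ {0,1}} ∑_{v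 ∈ {0,1}} ∏_{i=1}^N ρ[(f_i, u), (g_i, v)]. Then: M(f,f) = γ(m) where m is the number of indices i with f_i = 1 and γ(m) = c^{2(N−m)} s^{2m} (A^{N−m} B^m + A^m B^{N−m}); M(0⃗, 1⃗) = M(1⃗, 0⃗) = (αcs)^N where 0⃗ and 1⃗ are the constant functions; and M(f,g) = 0 for all other pairs (f,g). -/
open Matrix BigOperators

noncomputable section

private def rf (α c s A B : ℝ) (p q : Fin 2 × Fin 2) : ℝ :=
  if p = (0, 0) ∧ q = (0, 0) then A * c ^ 2
  else if p = (0, 1) ∧ q = (0, 1) then B * c ^ 2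
  else if p = (1, 0) ∧ q = (1, 0) then B * s ^ 2
  else if p = (1, 1) ∧ q = (1, 1) then A * s ^ 2
  else if (p = (0, 0) ∧ q = (1, 1)) ∨ (p = (1, 1) ∧ q = (0, 0)) then α * c * s
  else 0

private lemma rf_e00 (α c s A B : ℝ) (a : Fin 2) :
    rf α c s A B (a, 0) (a, 0) = if a = 0 then A * c ^ 2 else B * s ^ 2 := by
  fin_cases a <;> simp [rf, Prod.ext_iff]

private lemma rf_e11 (α c s A B : ℝ) (a : Fin 2) :
    rf α c s A B (a, 1) (a, 1) = if a = 0 then B * c ^ 2 else A * s ^ 2 := by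
  fin_cases a <;> simp [rf, Prod.ext_iff]

private lemma rf_e01 (α c s A B : ℝ) (a b : Fin 2) :
    rf α c s A B (a, 0) (b, 1) = if a = 0 ∧ b = 1 then α * c * s else 0 := by
  fin_cases a <;> fin_cases b <;> simp [rf, Prod.ext_iff]

private lemma rf_e10 (α c s A B : ℝ) (a b : Fin 2) :
    rf α c s A B (a, 1) (b, 0) = if a = 1 ∧ b = 0 then α * c * s else 0 := by
  fin_cases a <;> fin_cases b <;> simp [rf, Prod.ext_iff]

private lemma rf_neq (α c s A B : ℝ) (a b u : Fin 2) (h : a ≠ b) :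
    rf α c s A B (a, u) (b, u) = 0 := by
  fin_cases a <;> fin_cases b <;> fin_cases u <;> simp_all [rf, Prod.ext_iff]

private lemma fin2_eq_zero_iff (x : Fin 2) : x = 0 ↔ ¬ x = 1 := by
  fin_cases x <;> simp


/-- Entries of the (unnormalised) `N`-partite state
`M(f,g) = ∑_{u,v ∈ {0,1}} ∏ i, ρ[(f i, u), (g i, v)]` obtained by projecting the B-halves of
`N` copies of `ρ_{α,θ}` onto the GHZ vector: diagonal entries are `γ(m)` (where `m` is the
number of 1's in `f`), the two corner entries are `(αcs)^N`, and all other entries vanish. -/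
theorem stmt7 (N : ℕ) (hN : 1 ≤ N) (α θ : ℝ) (hα0 : 0 ≤ α) (hα1 : α ≤ 1)
    (hθ0 : 0 ≤ θ) (hθ : θ ≤ Real.pi / 4) :
    let c : ℝ := Real.cos θ
    let s : ℝ := Real.sin θ
    let A : ℝ := (1 + α) / 2
    let B : ℝ := (1 - α) / 2
    let ρ : Matrix (Fin 2 × Fin 2) (Fin 2 × Fin 2) ℝ :=
      Matrix.of (fun p q : Fin 2 × Fin 2 =>
        if p = (0, 0) ∧ q = (0, 0) then A * c ^ 2
        else if p = (0, 1) ∧ q = (0, 1) then B * c ^ 2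
        else if p = (1, 0) ∧ q = (1, 0) then B * s ^ 2
        else if p = (1, 1) ∧ q = (1, 1) then A * s ^ 2
        else if (p = (0, 0) ∧ q = (1, 1)) ∨ (p = (1, 1) ∧ q = (0, 0)) then α * c * s
        else 0)
    let M : Matrix (Fin N → Fin 2) (Fin N → Fin 2) ℝ :=
      Matrix.of fun f g => ∑ u : Fin 2, ∑ v : Fin 2, ∏ i, ρ (f i, u) (g i, v)
    let γ : ℕ → ℝ := fun m =>
      c ^ (2 * (N - m)) * s ^ (2 * m) * (A ^ (N - m) * B ^ m + A ^ m * B ^ (N - m))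
    (∀ f : Fin N → Fin 2,
        M f f = γ (Finset.univ.filter (fun i => f i = 1)).card) ∧
    M (fun _ => 0) (fun _ => 1) = (α * c * s) ^ N ∧
    M (fun _ => 1) (fun _ => 0) = (α * c * s) ^ N ∧
    (∀ f g : Fin N → Fin 2, f ≠ g →
      ¬(f = (fun _ => 0) ∧ g = (fun _ => 1)) →
      ¬(f = (fun _ => 1) ∧ g = (fun _ => 0)) →
      M f g = 0) := by
  intro c s A B ρ M γ
  have i0 : Fin N := ⟨0, hN⟩
  have hρ : ∀ p q, ρ p q = rf α c s A B p q := fun p q => rfl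
  have hM : ∀ f g : Fin N → Fin 2, M f g =
      (∏ i, rf α c s A B (f i, 0) (g i, 0)) + (∏ i, rf α c s A B (f i, 0) (g i, 1))
      + ((∏ i, rf α c s A B (f i, 1) (g i, 0)) + (∏ i, rf α c s A B (f i, 1) (g i, 1))) := by
    intro f g
    show (∑ u : Fin 2, ∑ v : Fin 2, ∏ i, ρ (f i, u) (g i, v)) = _
    simp only [hρ, Fin.sum_univ_two]
  refine ⟨?_, ?_, ?_, ?_⟩
  · intro f
    rw [hM]
    have h2 : (∏ i, rf α c s A B (f i, 0) (f i, 1)) = 0 := by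
      apply Finset.prod_eq_zero (Finset.mem_univ i0)
      rw [rf_e01, if_neg]
      rintro ⟨h1, h2⟩; rw [h1] at h2; exact absurd h2 (by decide)
    have h3 : (∏ i, rf α c s A B (f i, 1) (f i, 0)) = 0 := by
      apply Finset.prod_eq_zero (Finset.mem_univ i0)
      rw [rf_e10, if_neg]
      rintro ⟨h1, h2⟩; rw [h1] at h2; exact absurd h2 (by decide)
    rw [h2, h3]
    set m := (Finset.univ.filter (fun i => f i = 1)).card with hm
    have hfilt : (Finset.univ.filter (fun i : Fin N => f i = 0))
        = (Finset.univ.filter (fun i : Fin N => ¬ f i = 1)) := by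
      apply Finset.filter_congr; intro i _; exact fin2_eq_zero_iff (f i)
    have hcard : (Finset.univ.filter (fun i : Fin N => f i = 0)).card = N - m := by
      rw [hfilt]
      have := Finset.card_filter_add_card_filter_not (s := (Finset.univ : Finset (Fin N)))
        (p := fun i => f i = 1)
      simp only [Finset.card_univ, Fintype.card_fin] at this
      omega
    have p1 : (∏ i, rf α c s A B (f i, 0) (f i, 0)) = (A * c ^ 2) ^ (N - m) * (B * s ^ 2) ^ m := by
      simp only [rf_e00]
      rw [Finset.prod_ite, Finset.prod_const, Finset.prod_const, hcard]
      congr 1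
      have := Finset.card_filter_add_card_filter_not (s := (Finset.univ : Finset (Fin N)))
        (p := fun i => f i = 0)
      simp only [Finset.card_univ, Fintype.card_fin] at this
      have hm' : (Finset.univ.filter (fun i : Fin N => ¬ f i = 0)).card = m := by
        have : (Finset.univ.filter (fun i : Fin N => ¬ f i = 0))
            = (Finset.univ.filter (fun i : Fin N => f i = 1)) := by
          apply Finset.filter_congr; intro i _
          rw [fin2_eq_zero_iff (f i)]; tauto
        rw [this]
      rw [hm']
    have p4 : (∏ i, rf α c s A B (f i, 1) (f i, 1)) = (B * c ^ 2) ^ (N - m) * (A * s ^ 2) ^ m := by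
      simp only [rf_e11]
      rw [Finset.prod_ite, Finset.prod_const, Finset.prod_const, hcard]
      congr 1
      have hm' : (Finset.univ.filter (fun i : Fin N => ¬ f i = 0))
          = (Finset.univ.filter (fun i : Fin N => f i = 1)) := by
        apply Finset.filter_congr; intro i _
        rw [fin2_eq_zero_iff (f i)]; tauto
      rw [hm']
    rw [p1, p4]
    show _ = c ^ (2 * (N - m)) * s ^ (2 * m) * (A ^ (N - m) * B ^ m + A ^ m * B ^ (N - m))
    simp only [mul_pow, pow_mul]
    ring
  · rw [hM]
    have h1 : (∏ i : Fin N, rf α c s A B ((0 : Fin 2), 0) ((1 : Fin 2), 0)) = 0 :=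
      Finset.prod_eq_zero (Finset.mem_univ i0) (rf_neq α c s A B 0 1 0 (by decide))
    have h4 : (∏ i : Fin N, rf α c s A B ((0 : Fin 2), 1) ((1 : Fin 2), 1)) = 0 :=
      Finset.prod_eq_zero (Finset.mem_univ i0) (rf_neq α c s A B 0 1 1 (by decide))
    have h3 : (∏ i : Fin N, rf α c s A B ((0 : Fin 2), 1) ((1 : Fin 2), 0)) = 0 :=
      Finset.prod_eq_zero (Finset.mem_univ i0) (by rw [rf_e10]; simp)
    have h2 : (∏ i : Fin N, rf α c s A B ((0 : Fin 2), 0) ((1 : Fin 2), 1)) = (α * c * s) ^ N := by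
      rw [Finset.prod_congr rfl (fun i _ => (rf_e01 α c s A B 0 1).trans (if_pos ⟨rfl, rfl⟩)),
        Finset.prod_const, Finset.card_univ, Fintype.card_fin]
    rw [h1, h2, h3, h4]; ring
  · rw [hM]
    have h1 : (∏ i : Fin N, rf α c s A B ((1 : Fin 2), 0) ((0 : Fin 2), 0)) = 0 :=
      Finset.prod_eq_zero (Finset.mem_univ i0) (rf_neq α c s A B 1 0 0 (by decide))
    have h4 : (∏ i : Fin N, rf α c s A B ((1 : Fin 2), 1) ((0 : Fin 2), 1)) = 0 :=
      Finset.prod_eq_zero (Finset.mem_univ i0) (rf_neq α c s A B 1 0 1 (by decide))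
    have h2 : (∏ i : Fin N, rf α c s A B ((1 : Fin 2), 0) ((0 : Fin 2), 1)) = 0 :=
      Finset.prod_eq_zero (Finset.mem_univ i0) (by rw [rf_e01]; simp)
    have h3 : (∏ i : Fin N, rf α c s A B ((1 : Fin 2), 1) ((0 : Fin 2), 0)) = (α * c * s) ^ N := by
      rw [Finset.prod_congr rfl (fun i _ => (rf_e10 α c s A B 1 0).trans (if_pos ⟨rfl, rfl⟩)),
        Finset.prod_const, Finset.card_univ, Fintype.card_fin]
    rw [h1, h2, h3, h4]; ring
  · intro f g hfg hc1 hc2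
    rw [hM]
    obtain ⟨i, hi⟩ := Function.ne_iff.mp hfg
    have h1 : (∏ i, rf α c s A B (f i, 0) (g i, 0)) = 0 :=
      Finset.prod_eq_zero (Finset.mem_univ i) (rf_neq α c s A B _ _ 0 hi)
    have h4 : (∏ i, rf α c s A B (f i, 1) (g i, 1)) = 0 :=
      Finset.prod_eq_zero (Finset.mem_univ i) (rf_neq α c s A B _ _ 1 hi)
    have h2 : (∏ i, rf α c s A B (f i, 0) (g i, 1)) = 0 := by
      have : ∃ j, ¬(f j = 0 ∧ g j = 1) := by
        by_contra h; push_neg at h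
        exact hc1 ⟨funext fun j => (h j).1, funext fun j => (h j).2⟩
      obtain ⟨j, hj⟩ := this
      exact Finset.prod_eq_zero (Finset.mem_univ j) (by rw [rf_e01, if_neg hj])
    have h3 : (∏ i, rf α c s A B (f i, 1) (g i, 0)) = 0 := by
      have : ∃ j, ¬(f j = 1 ∧ g j = 0) := by
        by_contra h; push_neg at h
        exact hc2 ⟨funext fun j => (h j).1, funext fun j => (h j).2⟩
      obtain ⟨j, hj⟩ := this
      exact Finset.prod_eq_zero (Finset.mem_univ j) (by rw [rf_e10, if_neg hj])
    rw [h1, h2, h3, h4]; ring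

end
end

section
/- For every integer N ≥ 2 there exist real numbers α with 0 < α < 1 and θ with 0 < θ ≤ π/4 such that both: (i) cos²(2θ) ≥ (2α − 1)/((2 − α)α³), and (ii) 2 sin^N(2θ) (α^N + ((1+α)/2)^N + ((1−α)/2)^N − 1) / ((1 + α cos 2θ)^N + (1 − α cos 2θ)^N) > 0. -/
/-- For every `N ≥ 2` there are `α ∈ (0,1)` and `θ ∈ (0, π/4]` such that
(i) the unsteerability condition `cos²(2θ) ≥ (2α − 1)/((2 − α)α³)` holds, and (ii) the genuine
multipartite concurrence lower bound
`2 sin^N(2θ)(α^N + ((1+α)/2)^N + ((1−α)/2)^N − 1)/((1+α cos2θ)^N + (1−α cos2θ)^N)`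
is strictly positive. -/
theorem stmt13 (N : ℕ) (hN : 2 ≤ N) :
    ∃ α θ : ℝ, 0 < α ∧ α < 1 ∧ 0 < θ ∧ θ ≤ Real.pi / 4 ∧
      (2 * α - 1) / ((2 - α) * α ^ 3) ≤ Real.cos (2 * θ) ^ 2 ∧
      0 < 2 * Real.sin (2 * θ) ^ N *
            (α ^ N + ((1 + α) / 2) ^ N + ((1 - α) / 2) ^ N - 1) /
          ((1 + α * Real.cos (2 * θ)) ^ N + (1 - α * Real.cos (2 * θ)) ^ N) := by
  have hN2 : (2 : ℝ) ≤ (N : ℝ) := by exact_mod_cast hN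
  have hNpos : (0 : ℝ) < (N : ℝ) := by linarith
  obtain ⟨ε, hεdef⟩ : ∃ ε : ℝ, ε = 1 / (2 * N) := ⟨_, rfl⟩
  have hε0 : 0 < ε := by rw [hεdef]; positivity
  have hε4 : ε ≤ 1 / 4 := by
    rw [hεdef, div_le_div_iff₀ (by positivity) (by norm_num)]
    linarith
  have hNε : (N : ℝ) * ε = 1 / 2 := by
    rw [hεdef]; field_simp
  obtain ⟨α, hαdef⟩ : ∃ α : ℝ, α = 1 - ε := ⟨_, rfl⟩
  have hα0 : 0 < α := by rw [hαdef]; linarith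
  have hα1 : α < 1 := by rw [hαdef]; linarith
  have hD : 0 < (2 - α) * α ^ 3 := by
    have : 0 < 2 - α := by linarith
    positivity
  have hkey : (2 - α) * α ^ 3 - (2 * α - 1) = ε ^ 3 * (2 - ε) := by
    rw [hαdef]; ring
  have hR1 : (2 * α - 1) / ((2 - α) * α ^ 3) < 1 := by
    rw [div_lt_one hD]
    nlinarith [pow_pos hε0 3]
  obtain ⟨R, hRdef⟩ : ∃ R : ℝ, R = (2 * α - 1) / ((2 - α) * α ^ 3) := ⟨_, rfl⟩
  rw [← hRdef] at hR1
  obtain ⟨δ, hδdef⟩ : ∃ δ : ℝ, δ = (1 - R) / 4 := ⟨_, rfl⟩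
  have hδ0 : 0 < δ := by rw [hδdef]; linarith
  obtain ⟨θ, hθdef⟩ : ∃ θ : ℝ, θ = min (1 / 2) (Real.sqrt δ) := ⟨_, rfl⟩
  have hθ0 : 0 < θ := hθdef ▸ lt_min (by norm_num) (Real.sqrt_pos.mpr hδ0)
  have hθhalf : θ ≤ 1 / 2 := hθdef ▸ min_le_left _ _
  have hθ2 : θ ^ 2 ≤ δ := by
    have h1 : θ ≤ Real.sqrt δ := hθdef ▸ min_le_right _ _
    have h2 : θ ^ 2 ≤ Real.sqrt δ ^ 2 := by
      apply pow_le_pow_left₀ hθ0.le h1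
    rwa [Real.sq_sqrt hδ0.le] at h2
  have hcos : 1 - 2 * θ ^ 2 ≤ Real.cos (2 * θ) := by
    have := Real.one_sub_sq_div_two_le_cos (x := 2 * θ)
    nlinarith
  have hpos12 : (0 : ℝ) ≤ 1 - 2 * θ ^ 2 := by nlinarith
  refine ⟨α, θ, hα0, hα1, hθ0, ?_, ?_, ?_⟩
  · -- θ ≤ π/4
    have : (1 : ℝ) / 2 ≤ Real.pi / 4 := by
      have := Real.pi_gt_three; linarith
    linarith
  · -- condition (i)
    rw [← hRdef]
    have hsq : (1 - 2 * θ ^ 2) ^ 2 ≤ Real.cos (2 * θ) ^ 2 := by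
      nlinarith
    have : R ≤ (1 - 2 * θ ^ 2) ^ 2 := by
      rw [hδdef] at hθ2; nlinarith
    linarith
  · -- condition (ii)
    have hsin : 0 < Real.sin (2 * θ) := by
      apply Real.sin_pos_of_pos_of_lt_pi (by linarith)
      have := Real.pi_gt_three; linarith
    have hb1 : (1 : ℝ) / 2 ≤ α ^ N := by
      have := one_add_mul_le_pow (a := -ε) (by linarith) N
      have h : (1 : ℝ) + (N : ℝ) * (-ε) = 1 / 2 := by rw [mul_neg, hNε]; ring
      rw [h] at this
      simpa [hαdef, sub_eq_add_neg] using this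
    have hb2 : (3 : ℝ) / 4 ≤ ((1 + α) / 2) ^ N := by
      have := one_add_mul_le_pow (a := -(ε / 2)) (by linarith) N
      have h2 : (N : ℝ) * (ε / 2) = 1 / 4 := by
        rw [show (N : ℝ) * (ε / 2) = ((N : ℝ) * ε) / 2 by ring, hNε]; norm_num
      have h : (1 : ℝ) + (N : ℝ) * (-(ε / 2)) = 3 / 4 := by
        rw [mul_neg, h2]; norm_num
      rw [h] at this
      have he : (1 + α) / 2 = 1 + -(ε / 2) := by rw [hαdef]; ring
      rwa [he]
    have hb3 : 0 < ((1 - α) / 2) ^ N := by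
      have : 0 < (1 - α) / 2 := by rw [hαdef]; linarith
      positivity
    have hnum : 0 < α ^ N + ((1 + α) / 2) ^ N + ((1 - α) / 2) ^ N - 1 := by
      linarith
    have hc1 : Real.cos (2 * θ) ≤ 1 := Real.cos_le_one _
    have hc2 : -1 ≤ Real.cos (2 * θ) := Real.neg_one_le_cos _
    have hm1 : α * (-1) ≤ α * Real.cos (2 * θ) :=
      mul_le_mul_of_nonneg_left hc2 hα0.le
    have hm2 : α * Real.cos (2 * θ) ≤ α * 1 :=
      mul_le_mul_of_nonneg_left hc1 hα0.le
    have hden1 : 0 < 1 + α * Real.cos (2 * θ) := by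
      rw [mul_neg_one] at hm1; linarith
    have hden2 : 0 < 1 - α * Real.cos (2 * θ) := by
      rw [mul_one] at hm2; linarith
    have hden : 0 < (1 + α * Real.cos (2 * θ)) ^ N + (1 - α * Real.cos (2 * θ)) ^ N :=
      add_pos (pow_pos hden1 N) (pow_pos hden2 N)
    exact div_pos (mul_pos (mul_pos two_pos (pow_pos hsin N)) hnum) hden
end
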